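/- Let n be a positive integer, let m be a real number with 0 < m < n, let f : ℝⁿ → [0,∞) be Lebesgue-integrable, and let s > 0. Then the set S = { z ∈ ℝⁿ : limsup_{r→0⁺} (1/rᵐ) ∫_{B_r(z)} f dx > s } has m-dimensional Hausdorff measure zero, i.e. Hᵐ(S) = 0. -/

import Mathlib

/-! Bound `|f|` by `K + (|f| - K)⁺`. Since `m < n`, the bounded part contributes only
`K |B_r| = O(r^n) = o(r^m)` to `∫_{B_r(z)} |f|`, so at every point of `S` the tail `(|f| - K)⁺`
carries mass `≥ (s/2) r^m` on arbitrarily small balls. By the Vitali covering lemma, disjoint such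
balls whose 4-fold enlargements cover `S` give `Hᵐ(S) ≤ 8^m (s/2)⁻¹ ∫ (|f| - K)⁺`, and the right
side tends to `0` as `K → ∞`. -/

open MeasureTheory Metric Filter Topology Set Module
open scoped ENNReal

theorem Metric.ediam_closedBall_le {X : Type*} [PseudoMetricSpace X] (x : X) {r : ℝ}
    (hr : 0 ≤ r) : ediam (closedBall x r) ≤ 2 * ENNReal.ofReal r := by
  rw [← closedEBall_ofReal hr]
  exact ediam_closedEBall_le

section Vitali

variable {X : Type*} [MetricSpace X] [MeasurableSpace X] [BorelSpace X]
  {ν : Measure X} [IsFiniteMeasure ν] {m : ℝ} {c : ℝ≥0∞} {A : Set X}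

theorem exists_countable_disjoint_closedBall_cover (hc : c ≠ 0)
    (hA : ∀ z ∈ A, ∃ᶠ r in 𝓝[>] 0, c * ENNReal.ofReal (r ^ m) ≤ ν (closedBall z r))
    {δ : ℝ} (hδ : 0 < δ) :
    ∃ u : Set (X × ℝ), u.Countable ∧ u.PairwiseDisjoint (fun p ↦ closedBall p.1 p.2) ∧
      (∀ p ∈ u, 0 < p.2 ∧ p.2 ≤ δ ∧ c * ENNReal.ofReal (p.2 ^ m) ≤ ν (closedBall p.1 p.2)) ∧
      A ⊆ ⋃ p ∈ u, closedBall p.1 (4 * p.2) := by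
  set t : Set (X × ℝ) := {p | p.1 ∈ A ∧ 0 < p.2 ∧ p.2 ≤ δ ∧
    c * ENNReal.ofReal (p.2 ^ m) ≤ ν (closedBall p.1 p.2)}
  obtain ⟨u, hut, hdisj, hcover⟩ :=
    Vitali.exists_disjoint_subfamily_covering_enlargement_closedBall t Prod.fst Prod.snd δ
      (fun p hp ↦ hp.2.2.1) 4 (by norm_num)
  refine ⟨u, ?_, hdisj, fun p hp ↦ (hut hp).2, fun z hz ↦ ?_⟩
  · have hpos : {p : u | 0 < ν (closedBall p.1.1 p.1.2)} = univ := by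
      refine eq_univ_of_forall fun p ↦ lt_of_lt_of_le ?_ (hut p.2).2.2.2
      have hr := (hut p.2).2.1
      exact ENNReal.mul_pos hc (ENNReal.ofReal_pos.2 (Real.rpow_pos_of_pos hr m)).ne'
    have := Measure.countable_meas_pos_of_disjoint_iUnion (μ := ν)
      (fun _ ↦ measurableSet_closedBall) (hdisj.subtype _ _)
    rw [hpos, countable_univ_iff] at this
    exact countable_coe_iff.1 this
  · obtain ⟨r, hr, hr_mem⟩ := ((hA z hz).and_eventually (Ioo_mem_nhdsGT hδ)).exists
    obtain ⟨p, hpu, hsub⟩ := hcover (z, r) ⟨hz, hr_mem.1, hr_mem.2.le, hr⟩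
    exact mem_biUnion hpu (hsub (mem_closedBall_self hr_mem.1.le))

theorem hausdorffMeasure_le_of_frequently_le_measure_closedBall (hm : 0 ≤ m) (hc : c ≠ 0)
    (hA : ∀ z ∈ A, ∃ᶠ r in 𝓝[>] 0, c * ENNReal.ofReal (r ^ m) ≤ ν (closedBall z r)) :
    μH[m] A ≤ 8 ^ m * ν univ / c := by
  choose u hu_count hu_disj hu_mem hu_cover using fun k : ℕ ↦
    exists_countable_disjoint_closedBall_cover hc hA (Nat.one_div_pos_of_nat (n := k))
  have := fun k ↦ (hu_count k).to_subtype
  have hdiam : ∀ k (p : u k), ediam (closedBall p.1.1 (4 * p.1.2)) ≤ 8 * ENNReal.ofReal p.1.2 :=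
    fun k p ↦ by
      have hp := (hu_mem k p.1 p.2).1.le
      calc ediam (closedBall p.1.1 (4 * p.1.2)) ≤ 2 * ENNReal.ofReal (4 * p.1.2) :=
            ediam_closedBall_le _ (by positivity)
        _ = 8 * ENNReal.ofReal p.1.2 := by
          rw [ENNReal.ofReal_mul zero_le_four, ENNReal.ofReal_ofNat, ← mul_assoc]; norm_num
  have hsum : ∀ k, c * ∑' p : u k, ENNReal.ofReal (p.1.2 ^ m) ≤ ν univ := fun k ↦
    calc c * ∑' p : u k, ENNReal.ofReal (p.1.2 ^ m)
        = ∑' p : u k, c * ENNReal.ofReal (p.1.2 ^ m) := ENNReal.tsum_mul_left.symm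
      _ ≤ ∑' p : u k, ν (closedBall p.1.1 p.1.2) :=
          ENNReal.tsum_le_tsum fun p ↦ (hu_mem k p.1 p.2).2.2
      _ = ν (⋃ p ∈ u k, closedBall p.1 p.2) :=
          (measure_biUnion (hu_count k) (hu_disj k) fun _ _ ↦ measurableSet_closedBall).symm
      _ ≤ ν univ := measure_mono (subset_univ _)
  have hr : Tendsto (fun k : ℕ ↦ 8 * ENNReal.ofReal (1 / (k + 1))) atTop (𝓝 0) := by
    simpa using ENNReal.Tendsto.const_mul
      (ENNReal.tendsto_ofReal tendsto_one_div_add_atTop_nhds_zero_nat) (Or.inr (by norm_num))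
  refine (Measure.hausdorffMeasure_le_liminf_tsum m A _ hr
    (fun k (p : u k) ↦ closedBall p.1.1 (4 * p.1.2)) (Eventually.of_forall fun k p ↦ (hdiam k p).trans ?_)
    (Eventually.of_forall fun k ↦ (hu_cover k).trans_eq (biUnion_eq_iUnion _ _))).trans
    (liminf_le_of_frequently_le (Frequently.of_forall fun k ↦ ?_) (by isBoundedDefault))
  · gcongr
    exact (hu_mem k p.1 p.2).2.1
  calc ∑' p : u k, ediam (closedBall p.1.1 (4 * p.1.2)) ^ m
      ≤ ∑' p : u k, 8 ^ m * ENNReal.ofReal (p.1.2 ^ m) := ENNReal.tsum_le_tsum fun p ↦ by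
        rw [← ENNReal.ofReal_rpow_of_nonneg (hu_mem k p.1 p.2).1.le hm,
          ← ENNReal.mul_rpow_of_nonneg _ _ hm]
        gcongr
        exact hdiam k p
    _ = 8 ^ m * ∑' p : u k, ENNReal.ofReal (p.1.2 ^ m) := ENNReal.tsum_mul_left
    _ ≤ 8 ^ m * (ν univ / c) := by
      gcongr
      rw [ENNReal.le_div_iff_mul_le (Or.inl hc) (Or.inr (measure_ne_top ν univ)), mul_comm]
      exact hsum k
    _ = 8 ^ m * ν univ / c := (mul_div_assoc _ _ _).symm

end Vitali

theorem tendsto_lintegral_tsub_natCast {α : Type*} [MeasurableSpace α] {μ : Measure α}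
    {F : α → ℝ≥0∞} (hF : AEMeasurable F μ) (hF_int : ∫⁻ x, F x ∂μ ≠ ∞) :
    Tendsto (fun K : ℕ ↦ ∫⁻ x, F x - K ∂μ) atTop (𝓝 0) := by
  have hlim : ∀ᵐ x ∂μ, Tendsto (fun K : ℕ ↦ F x - K) atTop (𝓝 0) := by
    filter_upwards [ae_lt_top' hF hF_int] with x hx
    obtain ⟨N, hN⟩ := ENNReal.exists_nat_gt hx.ne
    refine tendsto_const_nhds.congr' ?_
    filter_upwards [eventually_ge_atTop N] with K hK
    exact (tsub_eq_zero_of_le (hN.le.trans (Nat.cast_le.2 hK))).symm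
  simpa using tendsto_lintegral_of_dominated_convergence' F (fun _ ↦ hF.sub aemeasurable_const)
    (fun _ ↦ ae_of_all _ fun _ ↦ tsub_le_self) hF_int hlim

theorem ofReal_one_div_rpow_mul_integral_le {α : Type*} [MeasurableSpace α] (μ : Measure α)
    (f : α → ℝ) {r : ℝ} (hr : 0 < r) (m : ℝ) :
    ENNReal.ofReal (1 / r ^ m * ∫ x, f x ∂μ) ≤ (∫⁻ x, ‖f x‖ₑ ∂μ) / ENNReal.ofReal (r ^ m) := by
  rw [ENNReal.ofReal_mul (by positivity), one_div, ENNReal.ofReal_inv_of_pos (by positivity),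
    ENNReal.div_eq_inv_mul]
  gcongr
  exact (Real.ofReal_le_enorm _).trans (enorm_integral_le_lintegral_enorm _)

section AddHaar

variable {E : Type*} [NormedAddCommGroup E] [NormedSpace ℝ E] [FiniteDimensional ℝ E]
  [MeasurableSpace E] [BorelSpace E] (μ : Measure E) [μ.IsAddHaarMeasure] {m : ℝ} {c : ℝ≥0∞}

theorem eventually_mul_measure_closedBall_lt (hm : m < finrank ℝ E) {K : ℝ≥0∞} (hK : K ≠ ∞)
    (hc : c ≠ 0) : ∀ᶠ r in 𝓝[>] 0, ∀ z, K * μ (closedBall z r) < c * ENNReal.ofReal (r ^ m) := by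
  have hexp : 0 < (finrank ℝ E : ℝ) - m := sub_pos.2 hm
  have hlim : Tendsto (fun r : ℝ ↦ K * μ (ball 0 1) * ENNReal.ofReal (r ^ ((finrank ℝ E : ℝ) - m)))
      (𝓝[>] 0) (𝓝 0) := by
    have hpow : Tendsto (fun r : ℝ ↦ r ^ ((finrank ℝ E : ℝ) - m)) (𝓝[>] 0) (𝓝 0) := by
      simpa [Real.zero_rpow hexp.ne'] using
        (Real.continuousAt_rpow_const 0 _ (Or.inr hexp.le)).tendsto.mono_left nhdsWithin_le_nhds
    simpa using ENNReal.Tendsto.const_mul (ENNReal.tendsto_ofReal hpow)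
      (Or.inr (ENNReal.mul_ne_top hK measure_ball_lt_top.ne))
  filter_upwards [hlim.eventually_lt_const (pos_iff_ne_zero.2 hc), self_mem_nhdsWithin]
    with r hr (hr0 : 0 < r) z
  have hrm : 0 < r ^ m := Real.rpow_pos_of_pos hr0 m
  calc K * μ (closedBall z r)
      = K * μ (ball 0 1) * ENNReal.ofReal (r ^ ((finrank ℝ E : ℝ) - m))
          * ENNReal.ofReal (r ^ m) := by
        rw [Measure.addHaar_closedBall μ z hr0.le, mul_assoc _ (ENNReal.ofReal _),
          ← ENNReal.ofReal_mul (by positivity), ← Real.rpow_add hr0, sub_add_cancel,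
          Real.rpow_natCast]
        ring
    _ < c * ENNReal.ofReal (r ^ m) :=
        (ENNReal.mul_lt_mul_iff_left (ENNReal.ofReal_pos.2 hrm).ne' ENNReal.ofReal_ne_top).2 hr

theorem frequently_le_withDensity_tsub_closedBall (hm : m < finrank ℝ E) (hc : c ≠ 0)
    {F : E → ℝ≥0∞} {K : ℝ≥0∞} (hK : K ≠ ∞) {z : E}
    (hz : ∃ᶠ r in 𝓝[>] 0, c * ENNReal.ofReal (r ^ m) < ∫⁻ x in ball z r, F x ∂μ) :
    ∃ᶠ r in 𝓝[>] 0,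
      c / 2 * ENNReal.ofReal (r ^ m) ≤ μ.withDensity (fun x ↦ F x - K) (closedBall z r) := by
  refine (hz.and_eventually (eventually_mul_measure_closedBall_lt μ hm hK
    (ENNReal.half_pos hc).ne')).mono fun r ⟨hr, hsmall⟩ ↦ ?_
  have hsplit : ∫⁻ x in ball z r, F x ∂μ ≤
      K * μ (closedBall z r) + μ.withDensity (fun x ↦ F x - K) (closedBall z r) :=
    calc ∫⁻ x in ball z r, F x ∂μ
        ≤ ∫⁻ x in closedBall z r, F x ∂μ := lintegral_mono_set ball_subset_closedBall
      _ ≤ ∫⁻ x in closedBall z r, K + (F x - K) ∂μ := lintegral_mono fun _ ↦ le_add_tsub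
      _ = _ := by
        rw [lintegral_add_left measurable_const, lintegral_const, Measure.restrict_apply_univ,
          withDensity_apply _ measurableSet_closedBall]
  rw [← ENNReal.add_halves c, add_mul] at hr
  have hlt := calc
    c / 2 * ENNReal.ofReal (r ^ m) + c / 2 * ENNReal.ofReal (r ^ m)
        < K * μ (closedBall z r) + μ.withDensity (fun x ↦ F x - K) (closedBall z r) :=
        hr.trans_le hsplit
    _ ≤ c / 2 * ENNReal.ofReal (r ^ m) + μ.withDensity (fun x ↦ F x - K) (closedBall z r) := by
        grw [(hsmall z).le]
  exact (lt_of_add_lt_add_left hlt).le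

theorem hausdorffMeasure_setOf_frequently_lt_lintegral_ball_eq_zero {F : E → ℝ≥0∞}
    (hF : AEMeasurable F μ) (hF_int : ∫⁻ x, F x ∂μ ≠ ∞) (hm0 : 0 ≤ m) (hm : m < finrank ℝ E)
    (hc : c ≠ 0) :
    μH[m] {z | ∃ᶠ r in 𝓝[>] 0, c * ENNReal.ofReal (r ^ m) < ∫⁻ x in ball z r, F x ∂μ} = 0 := by
  have hlim : Tendsto (fun K : ℕ ↦ 8 ^ m * (∫⁻ x, F x - K ∂μ) / (c / 2)) atTop (𝓝 0) := by
    simpa using ENNReal.Tendsto.div_const (ENNReal.Tendsto.const_mul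
      (tendsto_lintegral_tsub_natCast hF hF_int)
      (Or.inr (ENNReal.rpow_ne_top_of_nonneg hm0 (by norm_num)))) (Or.inr (ENNReal.half_pos hc).ne')
  refine le_zero_iff.1 (ge_of_tendsto' hlim fun K ↦ ?_)
  have : IsFiniteMeasure (μ.withDensity fun x ↦ F x - K) :=
    isFiniteMeasure_withDensity (ne_top_of_le_ne_top hF_int (lintegral_mono fun _ ↦ tsub_le_self))
  have h := hausdorffMeasure_le_of_frequently_le_measure_closedBall hm0 (ENNReal.half_pos hc).ne'
    fun z ↦ frequently_le_withDensity_tsub_closedBall μ hm hc (F := F) (ENNReal.natCast_ne_top K)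
  rwa [withDensity_apply _ MeasurableSet.univ, Measure.restrict_univ] at h

end AddHaar

theorem stmt_1_general (n : ℕ) (m : ℝ) (hm0 : 0 < m) (hmn : m < n)
    (f : EuclideanSpace ℝ (Fin n) → ℝ)
    (hf_int : Integrable f)
    (s : ℝ) (hs : 0 < s) :
    μH[m] {z : EuclideanSpace ℝ (Fin n) |
        ENNReal.ofReal s <
          Filter.limsup
            (fun r : ℝ => ENNReal.ofReal ((1 / r ^ m) * ∫ x in ball z r, f x))
            (𝓝[>] 0)} = 0 := by
  refine measure_mono_null (fun z (hz : ENNReal.ofReal s < _) ↦ ?_)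
    (hausdorffMeasure_setOf_frequently_lt_lintegral_ball_eq_zero volume hf_int.aemeasurable.enorm
      hf_int.2.ne hm0.le (by simpa using hmn) (ENNReal.ofReal_pos.2 hs).ne')
  refine ((frequently_lt_of_lt_limsup (by isBoundedDefault) hz).and_eventually
    self_mem_nhdsWithin).mono fun r ⟨hr, (hr0 : 0 < r)⟩ ↦ ?_
  have hrm : 0 < ENNReal.ofReal (r ^ m) := ENNReal.ofReal_pos.2 (Real.rpow_pos_of_pos hr0 m)
  rw [← ENNReal.lt_div_iff_mul_lt (Or.inl hrm.ne') (Or.inl ENNReal.ofReal_ne_top)]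
  exact hr.trans_le (ofReal_one_div_rpow_mul_integral_le _ f hr0 m)

/-- For `0 < m < n`, integrable nonnegative `f : ℝⁿ → [0,∞)` and `s > 0`,
the set of points where `limsup_{r→0⁺} r^{-m} ∫_{B_r(z)} f > s` has `Hᵐ`-measure zero. -/
theorem stmt_1 (n : ℕ) (hn : 0 < n) (m : ℝ) (hm0 : 0 < m) (hmn : m < n)
    (f : EuclideanSpace ℝ (Fin n) → ℝ)
    (hf_nonneg : ∀ x, 0 ≤ f x) (hf_int : Integrable f)
    (s : ℝ) (hs : 0 < s) :
    μH[m] {z : EuclideanSpace ℝ (Fin n) |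
        ENNReal.ofReal s <
          Filter.limsup
            (fun r : ℝ => ENNReal.ofReal ((1 / r ^ m) * ∫ x in ball z r, f x))
            (𝓝[>] 0)} = 0 :=
  stmt_1_general n m hm0 hmn f hf_int s hs
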